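/- arXiv:1910.09609 — 3 statements merged into one kernel-verified Lean document; each statement's English description precedes it below -/
import Mathlib

section
/- Let G be a residually finite group such that the set of nontrivial elements of finite order in G is contained in finitely many conjugacy classes. Then G has a torsion-free normal subgroup of finite index. -/
/-!
Residual finiteness gives, for each of the finitely many nontrivial representatives `s` of the
torsion conjugacy classes, a finite-index normal subgroup missing `s`. Their intersection `N` is
still normal of finite index, and being normal it misses every conjugate of every such `s`, i.e.
every nontrivial element of finite order.
-/

open Pointwise

section ActionDefs

variable (G : Type*) (X : Type*) [Group G] [MetricSpace X] [MulAction G X]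

/-- The action of `G` on `X` is by isometries. -/
def IsIsometricAction : Prop := ∀ g : G, Isometry fun x : X => g • x

/-- The action of `G` on `X` is properly discontinuous: for every compact `K`,
the set of `g` with `(g • K) ∩ K ≠ ∅` is finite. -/
def IsProperlyDiscontinuousAction : Prop :=
  ∀ K : Set X, IsCompact K → Set.Finite {g : G | ((g • K) ∩ K).Nonempty}

/-- The action of `G` on `X` is cocompact: some compact `K` has orbit covering `X`. -/
def IsCocompactAction : Prop :=
  ∃ K : Set X, IsCompact K ∧ ⋃ g : G, g • K = Set.univ

/-- A geometric action: by isometries, properly discontinuous, and cocompact. -/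
def IsGeometricAction : Prop :=
  IsIsometricAction G X ∧ IsProperlyDiscontinuousAction G X ∧ IsCocompactAction G X

end ActionDefs

/-- A metric space is geodesic if any two points are joined by an isometrically
embedded copy of the interval `[0, dist x y]`. -/
def IsGeodesicSpace (X : Type*) [MetricSpace X] : Prop :=
  ∀ x y : X, ∃ γ : Set.Icc (0 : ℝ) (dist x y) → X, Isometry γ ∧
    γ ⟨0, Set.left_mem_Icc.mpr dist_nonneg⟩ = x ∧
    γ ⟨dist x y, Set.right_mem_Icc.mpr dist_nonneg⟩ = y

/-- Two groups have a common model geometry if they both act geometrically on the same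
nonempty proper geodesic metric space. -/
def HasCommonModelGeometry (G G' : Type*) [Group G] [Group G'] : Prop :=
  ∃ (X : Type) (_ : MetricSpace X) (_ : Nonempty X) (_ : ProperSpace X)
    (_ : MulAction G X) (_ : MulAction G' X),
    IsGeodesicSpace X ∧ IsGeometricAction G X ∧ IsGeometricAction G' X

/-- An `(L, A)`-quasi-isometry between metric spaces. -/
def IsQuasiIsometry {X Y : Type*} [MetricSpace X] [MetricSpace Y] (L A : ℝ) (f : X → Y) : Prop :=
  (∀ x x' : X, (1 / L) * dist x x' - A ≤ dist (f x) (f x') ∧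
    dist (f x) (f x') ≤ L * dist x x' + A) ∧
  ∀ y : Y, ∃ x : X, dist y (f x) ≤ A

/-- A group is residually finite if every nontrivial element survives in some finite quotient. -/
def ResiduallyFinite (G : Type*) [Group G] : Prop :=
  ∀ g : G, g ≠ 1 → ∃ (Q : Type) (_ : Group Q) (_ : Finite Q) (φ : G →* Q), φ g ≠ 1

/-- Two groups are abstractly commensurable if they have isomorphic finite-index subgroups. -/
def AbstractlyCommensurable (G G' : Type*) [Group G] [Group G'] : Prop :=
  ∃ (H : Subgroup G) (H' : Subgroup G'), H.FiniteIndex ∧ H'.FiniteIndex ∧ Nonempty (H ≃* H')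

theorem Subgroup.Normal.mem_of_isConj {G : Type*} [Group G] {N : Subgroup G} (hN : N.Normal)
    {a b : G} (hab : IsConj a b) (hb : b ∈ N) : a ∈ N := by
  obtain ⟨c, rfl⟩ := isConj_iff.1 hab.symm
  exact hN.conj_mem b hb c

namespace ResiduallyFinite

variable {G : Type*} [Group G]

theorem exists_normal_finiteIndex_notMem (hrf : ResiduallyFinite G) {g : G} (hg : g ≠ 1) :
    ∃ N : Subgroup G, N.Normal ∧ N.FiniteIndex ∧ g ∉ N := by
  obtain ⟨Q, _, _, φ, hφ⟩ := hrf g hg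
  have : Finite (G ⧸ φ.ker) := Finite.of_injective _ (QuotientGroup.kerLift_injective φ)
  exact ⟨φ.ker, inferInstance, Subgroup.finiteIndex_of_finite_quotient, hφ⟩

theorem exists_normal_finiteIndex_forall_notMem (hrf : ResiduallyFinite G) (S : Finset G)
    (hS : (1 : G) ∉ S) : ∃ N : Subgroup G, N.Normal ∧ N.FiniteIndex ∧ ∀ s ∈ S, s ∉ N := by
  have hsep (s : S) : ∃ N : Subgroup G, N.Normal ∧ N.FiniteIndex ∧ (s : G) ∉ N :=
    hrf.exists_normal_finiteIndex_notMem fun h => hS (h ▸ s.2)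
  choose N hNn hNf hNs using hsep
  refine ⟨⨅ s, N s, Subgroup.normal_iInf_normal hNn, Subgroup.finiteIndex_iInf hNf, ?_⟩
  intro s hs hmem
  exact hNs ⟨s, hs⟩ (Subgroup.mem_iInf.1 hmem ⟨s, hs⟩)

end ResiduallyFinite

/-- A residually finite group whose nontrivial finite-order elements lie in finitely many
conjugacy classes has a torsion-free normal subgroup of finite index. -/
theorem statement1 {G : Type*} [Group G]
    (hrf : ResiduallyFinite G)
    (hfc : ∃ S : Finset G, ∀ g : G, g ≠ 1 → IsOfFinOrder g → ∃ s ∈ S, IsConj s g) :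
    ∃ N : Subgroup G, N.Normal ∧ N.FiniteIndex ∧ (∀ g : N, g ≠ 1 → ¬IsOfFinOrder g) := by
  classical
  obtain ⟨S, hS⟩ := hfc
  obtain ⟨N, hNn, hNf, hNS⟩ :=
    hrf.exists_normal_finiteIndex_forall_notMem (S.erase 1) (Finset.notMem_erase 1 S)
  refine ⟨N, hNn, hNf, fun g hg hfin => ?_⟩
  have hg1 : (g : G) ≠ 1 := by exact_mod_cast hg
  obtain ⟨s, hsS, hsg⟩ := hS g hg1 (N.subtype.isOfFinOrder hfin)
  have hs1 : s ≠ 1 := by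
    rintro rfl
    exact hg1 (isConj_one_right.1 hsg)
  exact hNS s (Finset.mem_erase.2 ⟨hs1, hsS⟩) (hNn.mem_of_isConj hsg g.2)
end

section
/- Let X be a nonempty geodesic metric space, let B, ℓ > 0, and let 𝒰 be a collection of nonempty subsets of X whose union is X, such that every U ∈ 𝒰 has diameter at most B, and every subset of X of diameter less than ℓ is contained in some member of 𝒰. Let N be the nerve graph of 𝒰: the simple graph with vertex set 𝒰 in which distinct U, V ∈ 𝒰 are adjacent if and only if U ∩ V ≠ ∅. Then N is connected, and there exist constants L ≥ 1 and A ≥ 0, depending only on B and ℓ, such that for every map φ : X → 𝒰 satisfying x ∈ φ(x) for all x ∈ X, one has (1/L)·dist(x, x′) − A ≤ d_N(φ(x), φ(x′)) ≤ L·dist(x, x′) + A for all x, x′ ∈ X, where d_N denotes the graph metric on N; moreover every vertex of N is at graph distance at most 1 from the image of φ. -/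
open Pointwise

/-- The nerve graph of a collection of subsets: vertices are the members of the collection,
and two distinct members are adjacent when they intersect. -/
def nerveGraph {X : Type*} (U : Set (Set X)) : SimpleGraph U where
  Adj A B := A ≠ B ∧ ((A : Set X) ∩ (B : Set X)).Nonempty
  symm := by
    constructor
    rintro A B ⟨hne, x, hxA, hxB⟩
    exact ⟨hne.symm, x, hxB, hxA⟩
  loopless := by
    constructor
    rintro A ⟨hne, -⟩
    exact hne rfl

/-!
A walk of length `n` in the nerve graph gives a chain of `n + 2` points of `X`, consecutive
points lying in a common member of diameter at most `B`; so the endpoints are at distance at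
most `B (n + 1)`.
Conversely, subdividing a geodesic from `x` to `x'` into `⌊d(x, x')/ℓ⌋ + 1` steps of length
less than `ℓ` puts each step inside some member, and consecutive such members meet, which
gives a walk of length at most `d(x, x')/ℓ + 2`.
-/

theorem IsGeodesicSpace.exists_lipschitzWith_one {X : Type*} [MetricSpace X]
    (hgeo : IsGeodesicSpace X) (x y : X) :
    ∃ f : ℝ → X, LipschitzWith 1 f ∧ f 0 = x ∧ f (dist x y) = y := by
  obtain ⟨γ, hγ, hγx, hγy⟩ := hgeo x y
  refine ⟨Set.IccExtend dist_nonneg γ, ?_, by rw [Set.IccExtend_left, hγx],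
    by rw [Set.IccExtend_right, hγy]⟩
  simpa [Set.IccExtend] using hγ.lipschitz.comp (LipschitzWith.projIcc dist_nonneg)

namespace nerveGraph

variable {X : Type*} {U : Set (Set X)}

theorem exists_walk_length_le_one {V W : U} (h : ((V : Set X) ∩ W).Nonempty) :
    ∃ w : (nerveGraph U).Walk V W, w.length ≤ 1 := by
  by_cases hVW : V = W
  · subst hVW
    exact ⟨.nil, zero_le_one⟩
  · exact ⟨(show (nerveGraph U).Adj V W from ⟨hVW, h⟩).toWalk, le_rfl⟩

variable [MetricSpace X]

theorem exists_walk_of_chain {ℓ : ℝ}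
    (hsmall : ∀ S : Set X, Metric.ediam S < ENNReal.ofReal ℓ → ∃ V ∈ U, S ⊆ V) :
    ∀ (n : ℕ) (p : ℕ → X), (∀ i < n, dist (p i) (p (i + 1)) < ℓ) →
      ∀ {V W : U}, p 0 ∈ (V : Set X) → p n ∈ (W : Set X) →
        ∃ w : (nerveGraph U).Walk V W, w.length ≤ n + 1
  | 0, p, _, _, _, hV, hW =>
    exists_walk_length_le_one ⟨p 0, hV, hW⟩
  | n + 1, p, hp, V, W, hV, hW => by
    have hpair : Metric.ediam {p 0, p 1} < ENNReal.ofReal ℓ := by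
      rw [Metric.ediam_pair, edist_lt_ofReal]
      exact hp 0 n.succ_pos
    obtain ⟨V₁, hV₁, hsub⟩ := hsmall _ hpair
    obtain ⟨w₀, hw₀⟩ := exists_walk_length_le_one (V := V) (W := ⟨V₁, hV₁⟩)
      ⟨p 0, hV, hsub (by simp)⟩
    obtain ⟨w₁, hw₁⟩ := exists_walk_of_chain hsmall n (fun i ↦ p (i + 1))
      (fun i hi ↦ hp (i + 1) (by omega)) (V := ⟨V₁, hV₁⟩) (hsub (by simp)) hW
    exact ⟨w₀.append w₁, by rw [SimpleGraph.Walk.length_append]; omega⟩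

theorem exists_walk_length_le_of_isGeodesicSpace {ℓ : ℝ} (hℓ : 0 < ℓ)
    (hgeo : IsGeodesicSpace X)
    (hsmall : ∀ S : Set X, Metric.ediam S < ENNReal.ofReal ℓ → ∃ V ∈ U, S ⊆ V)
    {V W : U} {x y : X} (hx : x ∈ (V : Set X)) (hy : y ∈ (W : Set X)) :
    ∃ w : (nerveGraph U).Walk V W, (w.length : ℝ) ≤ dist x y / ℓ + 2 := by
  obtain ⟨f, hf, hf0, hfd⟩ := hgeo.exists_lipschitzWith_one x y
  set d := dist x y
  obtain ⟨n, hn_gt, hn_le, hn_pos⟩ :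
      ∃ n : ℕ, d / ℓ < n ∧ (n : ℝ) ≤ d / ℓ + 1 ∧ 0 < (n : ℝ) := by
    have h := Nat.floor_le (div_nonneg (dist_nonneg : 0 ≤ d) hℓ.le)
    refine ⟨⌊d / ℓ⌋₊ + 1, ?_, ?_, by positivity⟩ <;> push_cast
    · exact Nat.lt_floor_add_one _
    · linarith
  have hchain : ∀ i < n, dist (f (i * (d / n))) (f ((i + 1 : ℕ) * (d / n))) < ℓ := by
    intro i _
    calc dist (f (i * (d / n))) (f ((i + 1 : ℕ) * (d / n)))
        ≤ |(i : ℝ) * (d / n) - (i + 1 : ℕ) * (d / n)| := by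
          simpa [Real.dist_eq] using hf.dist_le_mul (i * (d / n)) ((i + 1 : ℕ) * (d / n))
      _ = d / n := by
          rw [abs_sub_comm, Nat.cast_succ, add_mul, one_mul, add_sub_cancel_left,
            abs_of_nonneg (by positivity)]
      _ < ℓ := by rwa [div_lt_iff₀ hn_pos, ← div_lt_iff₀' hℓ]
  obtain ⟨w, hw⟩ := exists_walk_of_chain hsmall n (fun i ↦ f (i * (d / n))) hchain
    (by simpa [hf0] using hx) (by simpa [mul_div_cancel₀ d hn_pos.ne', hfd] using hy)
  refine ⟨w, (Nat.cast_le.mpr hw).trans ?_⟩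
  push_cast
  linarith

theorem dist_le_mul_length_add_one {B : ℝ} (hB : 0 ≤ B)
    (hdiam : ∀ V ∈ U, Metric.ediam V ≤ ENNReal.ofReal B) :
    ∀ {V W : U} (w : (nerveGraph U).Walk V W) {a b : X},
      a ∈ (V : Set X) → b ∈ (W : Set X) →
      dist a b ≤ B * (w.length + 1)
  | V, _, .nil, a, b, ha, hb => by
    simpa using (edist_le_ofReal hB).mp (Metric.edist_le_of_ediam_le ha hb (hdiam V V.2))
  | V, _, .cons hadj w, a, b, ha, hb => by
    obtain ⟨c, hcV, hc⟩ := hadj.2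
    have hac : dist a c ≤ B :=
      (edist_le_ofReal hB).mp (Metric.edist_le_of_ediam_le ha hcV (hdiam V V.2))
    calc dist a b ≤ dist a c + dist c b := dist_triangle _ _ _
      _ ≤ B + B * (w.length + 1) := add_le_add hac (dist_le_mul_length_add_one hB hdiam w hc hb)
      _ = B * ((w.cons hadj).length + 1) := by
        rw [SimpleGraph.Walk.length_cons]; push_cast; ring

end nerveGraph

/-- For a cover of a geodesic space by nonempty sets of diameter at most B such that every
set of diameter less than ℓ lies in some member, the nerve graph is connected and any map
sending each point to a member containing it is a quasi-isometry to the nerve graph, with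
constants depending only on B and ℓ. -/
theorem statement4 (B ℓ : ℝ) (hB : 0 < B) (hℓ : 0 < ℓ) :
    ∃ L A : ℝ, 1 ≤ L ∧ 0 ≤ A ∧
      ∀ (X : Type) (_ : MetricSpace X) (_ : Nonempty X),
        IsGeodesicSpace X →
        ∀ U : Set (Set X),
          (∀ V ∈ U, (V : Set X).Nonempty) →
          ⋃₀ U = Set.univ →
          (∀ V ∈ U, EMetric.diam (V : Set X) ≤ ENNReal.ofReal B) →
          (∀ S : Set X, EMetric.diam S < ENNReal.ofReal ℓ → ∃ V ∈ U, S ⊆ V) →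
          (nerveGraph U).Connected ∧
          ∀ φ : X → U, (∀ x : X, x ∈ (φ x : Set X)) →
            (∀ x x' : X,
              (1 / L) * dist x x' - A ≤ ((nerveGraph U).dist (φ x) (φ x') : ℝ) ∧
              ((nerveGraph U).dist (φ x) (φ x') : ℝ) ≤ L * dist x x' + A) ∧
            ∀ V : U, ∃ x : X, (nerveGraph U).dist V (φ x) ≤ 1 := by
  set L := max B (max (1 / ℓ) 1)
  have hBL : B ≤ L := le_max_left _ _
  have hℓL : 1 / ℓ ≤ L := (le_max_left _ _).trans (le_max_right _ _)
  refine ⟨L, 2, (le_max_right _ _).trans (le_max_right _ _), zero_le_two, ?_⟩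
  intro X _ _ hgeo U hne hcover hdiam hsmall
  have : Nonempty U := by
    obtain ⟨V, hV, -⟩ := Set.sUnion_eq_univ_iff.mp hcover (Classical.arbitrary X)
    exact ⟨⟨V, hV⟩⟩
  have hwalk {V W : U} {x y : X} (hx : x ∈ (V : Set X)) (hy : y ∈ (W : Set X)) :=
    nerveGraph.exists_walk_length_le_of_isGeodesicSpace hℓ hgeo hsmall hx hy
  have hconn : (nerveGraph U).Connected := ⟨fun V W ↦
    let ⟨_, hx⟩ := hne V V.2; let ⟨_, hy⟩ := hne W W.2; (hwalk hx hy).choose.reachable⟩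
  refine ⟨hconn, fun φ hφ ↦ ⟨fun x x' ↦ ⟨?_, ?_⟩, fun V ↦ ?_⟩⟩
  · obtain ⟨w, hw⟩ := (hconn (φ x) (φ x')).exists_walk_length_eq_dist
    have h := nerveGraph.dist_le_mul_length_add_one hB.le hdiam w (hφ x) (hφ x')
    rw [hw, ← div_le_iff₀' hB] at h
    have : 1 / L * dist x x' ≤ dist x x' / B := by
      rw [one_div_mul_eq_div]
      exact div_le_div_of_nonneg_left dist_nonneg hB hBL
    linarith
  · obtain ⟨w, hw⟩ := hwalk (hφ x) (hφ x')
    have : dist x x' / ℓ ≤ L * dist x x' := by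
      rw [div_eq_inv_mul, ← one_div]
      exact mul_le_mul_of_nonneg_right hℓL dist_nonneg
    have hdist : ((nerveGraph U).dist (φ x) (φ x') : ℝ) ≤ w.length := by
      exact_mod_cast SimpleGraph.dist_le w
    linarith
  · obtain ⟨x, hx⟩ := hne V V.2
    obtain ⟨w, hw⟩ := nerveGraph.exists_walk_length_le_one (W := φ x) ⟨x, hx, hφ x⟩
    exact ⟨x, (SimpleGraph.dist_le w).trans hw⟩
end

section
/- Let 𝒫 ⊆ ℍ be a nonempty subset of the hyperbolic plane that is discrete and closed as a subset of ℍ, and let Γ ≤ Isom(ℍ) be a subgroup acting geometrically on ℍ such that γ • 𝒫 = 𝒫 for every γ ∈ Γ. Then Γ has finite index in the setwise stabilizer Stab(𝒫) = {φ ∈ Isom(ℍ) : φ(𝒫) = 𝒫}. -/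
open Pointwise

/-- The natural action of the isometry group of the hyperbolic plane on the
hyperbolic plane. -/
noncomputable instance : MulAction (UpperHalfPlane ≃ᵢ UpperHalfPlane) UpperHalfPlane where
  smul φ x := φ x
  one_smul _ := rfl
  mul_smul _ _ _ := rfl

/-! The orbit of a point of `𝒫` under the cocompact group `Γ` stays in `𝒫`, so `𝒫` is coarsely
dense in `ℍ`. In the upper half-plane the geodesics, in particular all perpendicular bisectors,
are the curves `a |z|² + b Re z + c = 0`, i.e. the zero sets of linear forms in `(|z|², Re z, 1)`;
a coarsely dense set lies on no such curve, so it contains a finite set `F` from which every point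
of `ℍ` is recovered by its distances to `F`. An isometry preserving `𝒫` is thus determined by
the image of `F`, and those moving a base point into a compact set `K` send `F` into a finite
set `𝒫 ∩ B`; there are finitely many of them. Since the `Γ`-translates of `K` cover `ℍ`, every
coset of `Γ` in `Stab(𝒫)` contains one, so the index is finite. -/

open Set Metric
open scoped RealInnerProductSpace

section ResolvingSet

variable {X : Type*} [MetricSpace X]

def IsResolvingSet (F : Set X) : Prop :=
  ∀ x y : X, (∀ p ∈ F, dist x p = dist y p) → x = y

theorem IsResolvingSet.isometryEquiv_ext {F : Set X} (hF : IsResolvingSet F) {φ ψ : X ≃ᵢ X}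
    (h : EqOn φ ψ F) : φ = ψ := by
  ext z
  have : ψ.symm (φ z) = z := hF _ _ fun p hp => by
    rw [← ψ.dist_eq, ψ.apply_symm_apply, ← h hp, φ.dist_eq]
  exact ψ.symm_apply_eq.mp this

theorem IsResolvingSet.finite_setOf_mapsTo {F S : Set X} (hF : IsResolvingSet F)
    (hFfin : F.Finite) (hS : S.Finite) : {φ : X ≃ᵢ X | MapsTo φ F S}.Finite := by
  have := hFfin.to_subtype
  have := hS.to_subtype
  let restrict : {φ : X ≃ᵢ X | MapsTo φ F S} → (F → S) := fun φ => φ.2.restrict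
  refine Set.finite_coe_iff.mp (Finite.of_injective restrict fun φ ψ hφψ => ?_)
  exact Subtype.ext <| hF.isometryEquiv_ext fun p hp =>
    congrArg Subtype.val (congrFun hφψ ⟨p, hp⟩)

end ResolvingSet

theorem IsClosed.finite_inter_of_discreteTopology {X : Type*} [TopologicalSpace X] {P K : Set X}
    (hP : IsClosed P) [DiscreteTopology P] (hK : IsCompact K) : (P ∩ K).Finite :=
  (hK.inter_left hP).finite (isDiscrete_iff_discreteTopology.mpr ‹_› |>.mono inter_subset_left)

theorem IsIsometricAction.exists_dist_smul_le {G X : Type*} [Group G] [MetricSpace X]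
    [MulAction G X] (hiso : IsIsometricAction G X) {K : Set X} (hK : Bornology.IsBounded K)
    (hcover : ⋃ g : G, g • K = univ) (x₀ : X) : ∃ D, ∀ x : X, ∃ g : G, dist x (g • x₀) ≤ D := by
  obtain ⟨D, hD⟩ := hK.subset_closedBall x₀
  refine ⟨D, fun x => ?_⟩
  obtain ⟨g, hg⟩ := mem_iUnion.mp (hcover.symm ▸ mem_univ x)
  refine ⟨g, ?_⟩
  rw [← (hiso g⁻¹).dist_eq, inv_smul_smul]
  exact hD (mem_smul_set_iff_inv_smul_mem.mp hg)

theorem Subgroup.finiteIndex_subgroupOf_of_iUnion_smul_eq_univ {A X : Type*} [Group A]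
    [MulAction A X] {H G : Subgroup A} (hHG : H ≤ G) {K : Set X}
    (hcover : ⋃ h : H, h • K = univ) (x₀ : X) (hfin : {g : G | (g : A) • x₀ ∈ K}.Finite) :
    (H.subgroupOf G).FiniteIndex := by
  have := hfin.to_subtype
  let toQuotient : {g : G | (g : A) • x₀ ∈ K} → G ⧸ H.subgroupOf G := fun n => (n.1⁻¹ : G)
  suffices Function.Surjective toQuotient from
    have := Finite.of_surjective toQuotient this
    Subgroup.finiteIndex_of_finite_quotient
  intro q
  induction q using QuotientGroup.induction_on with | H g => ?_
  obtain ⟨h, hh⟩ := mem_iUnion.mp (hcover.symm ▸ mem_univ ((g : A)⁻¹ • x₀))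
  let n : G := ⟨h⁻¹, G.inv_mem (hHG h.2)⟩ * g⁻¹
  refine ⟨⟨n, ?_⟩, ?_⟩
  · simpa [n, mul_smul, Subgroup.smul_def] using mem_smul_set_iff_inv_smul_mem.mp hh
  · refine QuotientGroup.eq.mpr ?_
    simp [n, Subgroup.mem_subgroupOf]

open Submodule in
theorem eq_zero_of_forall_inner_eq_zero_of_span_eq_top {E : Type*} [NormedAddCommGroup E]
    [InnerProductSpace ℝ E] {s : Set E} (hs : span ℝ s = ⊤) {c : E}
    (hc : ∀ u ∈ s, ⟪c, u⟫ = 0) : c = 0 := by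
  have : span ℝ s ≤ (ℝ ∙ c)ᗮ :=
    span_le.mpr fun u hu => mem_orthogonal_singleton_iff_inner_right.mpr (hc u hu)
  exact inner_self_eq_zero.mp <| mem_orthogonal_singleton_iff_inner_right.mp <| this (hs ▸ mem_top)

namespace UpperHalfPlane

open scoped UpperHalfPlane
open Submodule

def circleCoords (z : ℍ) : EuclideanSpace ℝ (Fin 3) := !₂[z.re ^ 2 + z.im ^ 2, z.re, 1]

theorem inner_circleCoords (c : EuclideanSpace ℝ (Fin 3)) (z : ℍ) :
    ⟪c, circleCoords z⟫ = c 0 * (z.re ^ 2 + z.im ^ 2) + c 1 * z.re + c 2 := by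
  simp only [circleCoords, PiLp.inner_apply, RCLike.inner_apply, Real.ringHom_apply,
    Fin.sum_univ_three, Matrix.cons_val_zero, Matrix.cons_val_one, Matrix.cons_val]
  ring

def bisectorCoeffs (x y : ℍ) : EuclideanSpace ℝ (Fin 3) :=
  !₂[y.im - x.im, 2 * (y.re * x.im - x.re * y.im),
    (x.re ^ 2 + x.im ^ 2) * y.im - (y.re ^ 2 + y.im ^ 2) * x.im]

theorem inner_bisectorCoeffs_circleCoords {x y p : ℍ} (h : dist x p = dist y p) :
    ⟪bisectorCoeffs x y, circleCoords p⟫ = 0 := by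
  have h' := congrArg Real.cosh h
  simp only [cosh_dist, Complex.dist_eq, Complex.sq_norm, Complex.normSq_apply,
    Complex.sub_re, Complex.sub_im, coe_re, coe_im] at h'
  have := x.im_pos
  have := y.im_pos
  have := p.im_pos
  field_simp at h'
  rw [inner_circleCoords]
  simp only [bisectorCoeffs, Matrix.cons_val_zero, Matrix.cons_val_one, Matrix.cons_val]
  linear_combination h'

theorem eq_of_bisectorCoeffs_eq_zero {x y : ℍ} (h : bisectorCoeffs x y = 0) : x = y := by
  have h0 := congrFun (congrArg WithLp.ofLp h) 0
  have h1 := congrFun (congrArg WithLp.ofLp h) 1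
  simp only [bisectorCoeffs, Matrix.cons_val_zero, Matrix.cons_val_one,
    PiLp.zero_apply, mul_eq_zero, OfNat.ofNat_ne_zero, false_or] at h0 h1
  have him : x.im = y.im := by linarith
  have hre : x.re = y.re := by
    rw [him] at h1
    nlinarith [y.im_pos]
  exact UpperHalfPlane.ext (Complex.ext hre him)

theorem isResolvingSet_of_span_circleCoords_eq_top {F : Set ℍ}
    (hF : span ℝ (circleCoords '' F) = ⊤) : IsResolvingSet F := fun x y h =>
  eq_of_bisectorCoeffs_eq_zero <| eq_zero_of_forall_inner_eq_zero_of_span_eq_top hF <| by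
    rintro _ ⟨p, hp, rfl⟩
    exact inner_bisectorCoeffs_circleCoords (h p hp)

theorem exists_forall_re_eq_lt_dist (a D : ℝ) : ∃ x : ℍ, ∀ p : ℍ, p.re = a → D < dist x p := by
  let x : ℍ := ⟨⟨a + Real.exp D, 1⟩, one_pos⟩
  refine ⟨x, fun p hp => ?_⟩
  have hre : Real.exp D ≤ dist (p : ℂ) x := by
    simpa [x, hp, Complex.dist_eq, abs_of_pos (Real.exp_pos D)] using
      Complex.abs_re_le_norm ((p : ℂ) - x)
  have hcoe : dist (p : ℂ) x ≤ Real.exp (dist x p) - 1 := by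
    simpa [x, dist_comm] using dist_coe_le p x
  by_contra! hle
  linarith [Real.exp_le_exp.mpr hle]

theorem exists_forall_im_le_lt_dist (M D : ℝ) : ∃ x : ℍ, ∀ p : ℍ, p.im ≤ M → D < dist x p := by
  have hT : 0 < |M| * Real.exp D + 1 := by positivity
  let x : ℍ := ⟨⟨0, |M| * Real.exp D + 1⟩, hT⟩
  refine ⟨x, fun p hp => ?_⟩
  by_contra! hle
  have hx := im_le_im_mul_exp_dist x p
  have : p.im * Real.exp (dist x p) ≤ |M| * Real.exp D :=
    mul_le_mul (hp.trans (le_abs_self M)) (Real.exp_le_exp.mpr hle) (Real.exp_pos _).le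
      (abs_nonneg M)
  have hxim : x.im = |M| * Real.exp D + 1 := rfl
  linarith

theorem im_le_of_inner_circleCoords_eq_zero {c : EuclideanSpace ℝ (Fin 3)} (hc : c 0 ≠ 0)
    {p : ℍ} (hp : ⟪c, circleCoords p⟫ = 0) :
    p.im ≤ (c 1 ^ 2 / 4 - c 0 * c 2) / c 0 ^ 2 + 1 := by
  rw [inner_circleCoords] at hp
  have hc2 : 0 < c 0 ^ 2 := by positivity
  have : c 0 ^ 2 * p.im ^ 2 = c 1 ^ 2 / 4 - c 0 * c 2 - (c 0 * p.re + c 1 / 2) ^ 2 := by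
    linear_combination c 0 * hp
  have : p.im ^ 2 ≤ (c 1 ^ 2 / 4 - c 0 * c 2) / c 0 ^ 2 := by
    rw [le_div_iff₀ hc2]
    nlinarith [sq_nonneg (c 0 * p.re + c 1 / 2)]
  nlinarith [sq_nonneg (p.im - 1)]

theorem exists_forall_inner_circleCoords_eq_zero_lt_dist {c : EuclideanSpace ℝ (Fin 3)}
    (hc : c ≠ 0) (D : ℝ) : ∃ x : ℍ, ∀ p : ℍ, ⟪c, circleCoords p⟫ = 0 → D < dist x p := by
  by_cases hc0 : c 0 = 0
  · by_cases hc1 : c 1 = 0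
    · have hc2 : c 2 ≠ 0 := fun hc2 => hc <| by
        ext i
        fin_cases i <;> assumption
      exact ⟨I, fun p hp => absurd (by simpa [inner_circleCoords, hc0, hc1] using hp) hc2⟩
    · obtain ⟨x, hx⟩ := exists_forall_re_eq_lt_dist (-c 2 / c 1) D
      refine ⟨x, fun p hp => hx p ?_⟩
      rw [inner_circleCoords, hc0] at hp
      field_simp
      linarith
  · obtain ⟨x, hx⟩ := exists_forall_im_le_lt_dist ((c 1 ^ 2 / 4 - c 0 * c 2) / c 0 ^ 2 + 1) D
    exact ⟨x, fun p hp => hx p (im_le_of_inner_circleCoords_eq_zero hc0 hp)⟩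

theorem span_circleCoords_eq_top {P : Set ℍ} {D : ℝ} (hP : ∀ x : ℍ, ∃ p ∈ P, dist x p ≤ D) :
    span ℝ (circleCoords '' P) = ⊤ := by
  by_contra htop
  obtain ⟨c, hc, hc0⟩ := (Submodule.ne_bot_iff _).mp (mt orthogonal_eq_bot_iff.mp htop)
  obtain ⟨x, hx⟩ := exists_forall_inner_circleCoords_eq_zero_lt_dist hc0 D
  obtain ⟨p, hp, hxp⟩ := hP x
  refine (hx p ?_).not_ge hxp
  rw [real_inner_comm]
  exact inner_right_of_mem_orthogonal (subset_span (mem_image_of_mem _ hp)) hc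

theorem exists_finite_isResolvingSet_subset {P : Set ℍ} {D : ℝ}
    (hP : ∀ x : ℍ, ∃ p ∈ P, dist x p ≤ D) : ∃ F ⊆ P, F.Finite ∧ IsResolvingSet F := by
  obtain ⟨t, hts, -, ht, -⟩ := exists_finset_span_eq_linearIndepOn ℝ (circleCoords '' P)
  obtain ⟨F, hFP, hF, hFt⟩ := (exists_subset_image_finite_and (f := circleCoords) (s := P)
    (p := fun s => span ℝ s = ⊤)).mp
    ⟨↑t, hts, t.finite_toSet, ht.trans (span_circleCoords_eq_top hP)⟩
  exact ⟨F, hFP, hF, isResolvingSet_of_span_circleCoords_eq_top hFt⟩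

end UpperHalfPlane

/-- If a nonempty discrete closed subset P of the hyperbolic plane is stabilized by a
uniform lattice Γ of Isom(ℍ²), then Γ has finite index in the setwise stabilizer of P. -/
theorem statement7 (P : Set UpperHalfPlane) (hne : P.Nonempty)
    (hclosed : IsClosed P) (hdisc : DiscreteTopology P)
    (Γ : Subgroup (UpperHalfPlane ≃ᵢ UpperHalfPlane))
    (hgeo : IsGeometricAction Γ UpperHalfPlane)
    (hstab : ∀ γ ∈ Γ, γ • P = P) :
    (Γ.subgroupOf (MulAction.stabilizer (UpperHalfPlane ≃ᵢ UpperHalfPlane) P)).FiniteIndex := by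
  obtain ⟨hiso, -, K, hK, hcover⟩ := hgeo
  obtain ⟨p₀, hp₀⟩ := hne
  obtain ⟨D, hD⟩ := hiso.exists_dist_smul_le hK.isBounded hcover p₀
  have hdense : ∀ x, ∃ p ∈ P, dist x p ≤ D := fun x =>
    let ⟨γ, hγ⟩ := hD x
    ⟨γ • p₀, (hstab γ γ.2).subset (smul_mem_smul_set hp₀), hγ⟩
  obtain ⟨F, hFP, hFfin, hF⟩ := UpperHalfPlane.exists_finite_isResolvingSet_subset hdense
  obtain ⟨r, hr⟩ := hFfin.isBounded.subset_closedBall p₀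
  obtain ⟨R, hR⟩ := hK.isBounded.subset_closedBall p₀
  have hS := hclosed.finite_inter_of_discreteTopology (isCompact_closedBall p₀ (r + R))
  refine Subgroup.finiteIndex_subgroupOf_of_iUnion_smul_eq_univ (fun γ hγ => hstab γ hγ)
    hcover p₀ (((hF.finite_setOf_mapsTo hFfin hS).preimage Subtype.val_injective.injOn).subset ?_)
  rintro ⟨φ, hφP⟩ hφK p hp
  refine ⟨?_, ?_⟩
  · exact (MulAction.mem_stabilizer_iff.mp hφP).subset (smul_mem_smul_set (hFP hp))
  · calc dist (φ p) p₀ ≤ dist (φ p) (φ p₀) + dist (φ p₀) p₀ := dist_triangle _ _ _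
        _ ≤ r + R := add_le_add (φ.dist_eq p p₀ ▸ hr hp) (hR hφK)
end
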